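/- arXiv:2501.10816 — 5 statements merged into one kernel-verified Lean document; each statement's English description precedes it below -/
import Mathlib

section
/- Let $b>0$ and $m\geq 0$ satisfy $b^2>4m$. Then there exists a constant $C>0$, depending only on $b$ and $m$, such that for every real number $\Lambda$ with $\Lambda>\tfrac12\left(\tfrac{b^2}{4}-m\right)$, every twice continuously differentiable function $y:[0,\infty)\to\mathbb{C}$ satisfying $y''(t)+b\,y'(t)+(\Lambda+m)\,y(t)=0$ for all $t\geq 0$, and every $t>0$, one has $|y(t)|^2\leq C\,e^{\left(-b+\sqrt{\frac12(b^2-4m)}\right)t}\left(|y(0)|^2+|y'(0)|^2\right)$. -/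
/-!
Write `s = √((b² - 4m)/2)` and `w = y' + (b/2) y`. Along a solution, the weighted energy
`e^{(b-s)t} (‖w‖² + Λ‖y‖²)` has derivative `-s e^{(b-s)t} (‖w - (s/2) y‖² + (Λ - s²/4)‖y‖²)`,
so it is nonincreasing as soon as `Λ ≥ s²/4 = (b²/4 - m)/2`. Comparing its values at `t` and at
`0` bounds `e^{(b-s)t}‖y(t)‖²` by `(1 + (1 + b²/4)/Λ)(‖y(0)‖² + ‖y'(0)‖²)`, and `Λ > s²/4` makes
`1/Λ < 4/s²`, which is uniform in `Λ`.
-/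

open Set Real

section DampedOscillator

variable {E : Type*} [NormedAddCommGroup E] [InnerProductSpace ℝ E]

noncomputable def dampedEnergy (b s Λ : ℝ) (y y' : ℝ → E) (t : ℝ) : ℝ :=
  exp ((b - s) * t) * (‖y' t + (b / 2) • y t‖ ^ 2 + Λ * ‖y t‖ ^ 2)

variable {b m s Λ : ℝ} {y y' y'' : ℝ → E}

theorem sq_norm_add_smul_le (x z : E) (c : ℝ) :
    ‖x + c • z‖ ^ 2 ≤ (1 + c ^ 2) * (‖x‖ ^ 2 + ‖z‖ ^ 2) := by
  have h := norm_add_le x (c • z)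
  rw [norm_smul, norm_eq_abs] at h
  nlinarith [sq_nonneg (|c| * ‖x‖ - ‖z‖), sq_abs c, norm_nonneg (x + c • z)]

theorem hasDerivAt_dampedEnergy (hs : 2 * s ^ 2 = b ^ 2 - 4 * m) {t : ℝ}
    (hy : HasDerivAt y (y' t) t) (hy' : HasDerivAt y' (y'' t) t)
    (hode : y'' t + b • y' t + (Λ + m) • y t = 0) :
    HasDerivAt (dampedEnergy b s Λ y y')
      (-s * exp ((b - s) * t) *
        (‖y' t + (b / 2) • y t - (s / 2) • y t‖ ^ 2 + (Λ - s ^ 2 / 4) * ‖y t‖ ^ 2)) t := by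
  have hw := (hy'.add (hy.const_smul (b / 2))).norm_sq
  have hweight := ((hasDerivAt_id t).const_mul (b - s)).exp
  refine (hweight.mul (hw.add (hy.norm_sq.const_mul Λ))).congr_deriv ?_
  obtain ⟨w, hv⟩ : ∃ w, y' t = w - (b / 2) • y t := ⟨_, (add_sub_cancel_right _ _).symm⟩
  have hw' : y'' t + (b / 2) • y' t = (b ^ 2 / 4 - Λ - m) • y t - (b / 2) • w := by
    rw [hv] at hode ⊢; linear_combination (norm := module) hode
  simp only [Pi.add_apply, Pi.smul_apply, id, mul_one]
  rw [hw', hv, sub_add_cancel, norm_sub_sq_real]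
  simp only [inner_sub_right, inner_smul_right, real_inner_self_eq_norm_sq,
    real_inner_comm w (y t), norm_smul, mul_pow, norm_eq_abs, sq_abs]
  linear_combination (-exp ((b - s) * t) * inner ℝ w (y t) / 2) * hs

theorem antitoneOn_dampedEnergy {D : Set ℝ} (hD : Convex ℝ D) (hs : 2 * s ^ 2 = b ^ 2 - 4 * m)
    (hs₀ : 0 ≤ s) (hΛ : s ^ 2 / 4 ≤ Λ) (hyc : ContinuousOn y D) (hy'c : ContinuousOn y' D)
    (hy : ∀ t ∈ interior D, HasDerivAt y (y' t) t)
    (hy' : ∀ t ∈ interior D, HasDerivAt y' (y'' t) t)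
    (hode : ∀ t ∈ interior D, y'' t + b • y' t + (Λ + m) • y t = 0) :
    AntitoneOn (dampedEnergy b s Λ y y') D := by
  refine antitoneOn_of_hasDerivWithinAt_nonpos hD (by unfold dampedEnergy; fun_prop)
    (fun t ht ↦ (hasDerivAt_dampedEnergy hs (hy t ht) (hy' t ht) (hode t ht)).hasDerivWithinAt)
    fun t _ ↦ mul_nonpos_of_nonpos_of_nonneg
      (mul_nonpos_of_nonpos_of_nonneg (neg_nonpos.2 hs₀) (exp_pos _).le)
      (add_nonneg (sq_nonneg _) (mul_nonneg (sub_nonneg.2 hΛ) (sq_nonneg _)))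

theorem sq_norm_le_of_dampedEnergy_le (hs₀ : 0 < s) (hΛ : s ^ 2 / 4 < Λ) {t : ℝ}
    (h : dampedEnergy b s Λ y y' t ≤ dampedEnergy b s Λ y y' 0) :
    ‖y t‖ ^ 2 ≤ (1 + (4 + b ^ 2) / s ^ 2) * exp ((-b + s) * t) * (‖y 0‖ ^ 2 + ‖y' 0‖ ^ 2) := by
  set N := ‖y 0‖ ^ 2 + ‖y' 0‖ ^ 2
  have hΛ₀ : 0 < Λ := lt_of_le_of_lt (by positivity) hΛ
  have h₀ : dampedEnergy b s Λ y y' 0 ≤ (4 + b ^ 2) / 4 * N + Λ * N := by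
    have := sq_norm_add_smul_le (y' 0) (y 0) (b / 2)
    have := mul_nonneg hΛ₀.le (sq_nonneg ‖y' 0‖)
    simp only [dampedEnergy, mul_zero, exp_zero, one_mul]
    linarith
  have ht : Λ * (exp ((b - s) * t) * ‖y t‖ ^ 2) ≤ dampedEnergy b s Λ y y' t := by
    have := mul_nonneg (exp_pos ((b - s) * t)).le (sq_nonneg ‖y' t + (b / 2) • y t‖)
    simp only [dampedEnergy]
    linarith
  have hweighted : exp ((b - s) * t) * ‖y t‖ ^ 2 ≤ (1 + (4 + b ^ 2) / s ^ 2) * N := by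
    have hN : 0 ≤ N := by positivity
    have : (4 + b ^ 2) / 4 / Λ ≤ (4 + b ^ 2) / s ^ 2 := by
      rw [div_div]; exact div_le_div_of_nonneg_left (by positivity) (by positivity) (by linarith)
    rw [← mul_le_mul_iff_right₀ hΛ₀]
    calc Λ * (exp ((b - s) * t) * ‖y t‖ ^ 2)
        ≤ (4 + b ^ 2) / 4 * N + Λ * N := ht.trans (h.trans h₀)
      _ = Λ * ((1 + (4 + b ^ 2) / 4 / Λ) * N) := by field_simp; ring
      _ ≤ Λ * ((1 + (4 + b ^ 2) / s ^ 2) * N) := by gcongr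
  calc ‖y t‖ ^ 2 = exp ((-b + s) * t) * (exp ((b - s) * t) * ‖y t‖ ^ 2) := by
        rw [← mul_assoc, ← exp_add]; ring_nf; simp
    _ ≤ exp ((-b + s) * t) * ((1 + (4 + b ^ 2) / s ^ 2) * N) := by gcongr
    _ = _ := by ring

end DampedOscillator

theorem stmt_3_general (b m : ℝ) (hbm : 4 * m < b ^ 2) :
    ∃ C : ℝ, 0 < C ∧ ∀ Λ : ℝ, (b ^ 2 / 4 - m) / 2 < Λ →
      ∀ y : ℝ → ℂ, ContDiffOn ℝ 2 y (Set.Ici 0) →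
      (∀ t ∈ Set.Ici (0 : ℝ),
        derivWithin (derivWithin y (Set.Ici 0)) (Set.Ici 0) t
          + (b : ℂ) * derivWithin y (Set.Ici 0) t
          + ((Λ : ℂ) + (m : ℂ)) * y t = 0) →
      ∀ t : ℝ, 0 < t →
        ‖y t‖ ^ 2 ≤
          C * Real.exp ((-b + Real.sqrt ((b ^ 2 - 4 * m) / 2)) * t) *
            (‖y 0‖ ^ 2
              + ‖derivWithin y (Set.Ici 0) 0‖ ^ 2) := by
  set s := √((b ^ 2 - 4 * m) / 2)
  have hs : 2 * s ^ 2 = b ^ 2 - 4 * m := by rw [sq_sqrt (by linarith)]; ring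
  have hs₀ : 0 < s := sqrt_pos.2 (by linarith)
  refine ⟨1 + (4 + b ^ 2) / s ^ 2, by positivity, fun Λ hΛ y hy hode t ht ↦ ?_⟩
  have hΛs : s ^ 2 / 4 < Λ := by linarith
  have hy' : ContDiffOn ℝ 1 (derivWithin y (Ici 0)) (Ici 0) :=
    hy.derivWithin (uniqueDiffOn_Ici 0) (by norm_num)
  have hasDerivAt_of_contDiffOn {f : ℝ → ℂ} (hf : ContDiffOn ℝ 1 f (Ici 0)) :
      ∀ t ∈ interior (Ici (0 : ℝ)), HasDerivAt f (derivWithin f (Ici 0) t) t := fun t ht ↦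
    (hf.differentiableOn one_ne_zero t (interior_subset ht)).hasDerivWithinAt.hasDerivAt
      (mem_interior_iff_mem_nhds.1 ht)
  have hdecay := antitoneOn_dampedEnergy (convex_Ici 0) hs hs₀.le hΛs.le hy.continuousOn
    hy'.continuousOn (hasDerivAt_of_contDiffOn (hy.of_le one_le_two))
    (hasDerivAt_of_contDiffOn hy') fun t ht ↦ by
      simpa [Complex.real_smul] using hode t (interior_subset ht)
  exact sq_norm_le_of_dampedEnergy_le hs₀ hΛs (hdecay self_mem_Ici ht.le ht.le)

/-- Large-frequency estimate: for `Λ > (b²/4 - m)/2` and any C² solution `y` of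
`y'' + b y' + (Λ + m) y = 0` on `[0,∞)`, one has
`|y(t)|² ≤ C e^{(-b+√(½(b²-4m)))t} (|y(0)|² + |y'(0)|²)` with `C = C(b,m)`. -/
theorem stmt_3 (b m : ℝ) (hb : 0 < b) (hm : 0 ≤ m) (hbm : 4 * m < b ^ 2) :
    ∃ C : ℝ, 0 < C ∧ ∀ Λ : ℝ, (b ^ 2 / 4 - m) / 2 < Λ →
      ∀ y : ℝ → ℂ, ContDiffOn ℝ 2 y (Set.Ici 0) →
      (∀ t ∈ Set.Ici (0 : ℝ),
        derivWithin (derivWithin y (Set.Ici 0)) (Set.Ici 0) t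
          + (b : ℂ) * derivWithin y (Set.Ici 0) t
          + ((Λ : ℂ) + (m : ℂ)) * y t = 0) →
      ∀ t : ℝ, 0 < t →
        ‖y t‖ ^ 2 ≤
          C * Real.exp ((-b + Real.sqrt ((b ^ 2 - 4 * m) / 2)) * t) *
            (‖y 0‖ ^ 2
              + ‖derivWithin y (Set.Ici 0) 0‖ ^ 2) :=
  stmt_3_general b m hbm
end

section
/- Let $b>0$ and $m\geq 0$ satisfy $b^2>4m$. Then there exists a constant $C>0$, depending only on $b$ and $m$, such that for every real number $\Lambda$ with $0<\Lambda<\tfrac12\left(\tfrac{b^2}{4}-m\right)$, every twice continuously differentiable function $y:[0,\infty)\to\mathbb{C}$ satisfying $y''(t)+b\,y'(t)+(\Lambda+m)\,y(t)=0$ for all $t\geq 0$, and every $t>0$, one has $|y'(t)|^2\leq C\,e^{\left(-b+\sqrt{b^2-4m-4\Lambda}\right)t}(\Lambda+m)^2\left(|y(0)|^2+|y'(0)|^2\right)+C\,e^{\left(-b-\sqrt{b^2-4m-4\Lambda}\right)t}|y'(0)|^2$. -/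
/-!
The characteristic roots `p, q = (-b ± δ) / 2`, `δ = √(b² - 4m - 4Λ)`, are real and negative.
Factoring the equation as `(D - p)(D - q) y = 0`, the functions `y' - q y` and `y' - p y` evolve
by `e^{pt}` and `e^{qt}`, so `(p - q) y'(t)` is an explicit combination of these exponentials.
Since `pq = Λ + m`, `|p| = 2(Λ + m)/(b + δ) ≤ 2(Λ + m)/b`, `|q| ≤ b` and, on the range of `Λ`,
`δ² ≥ (b² - 4m)/2`, squaring gives the estimate.
-/

open Set

theorem eq_exp_smul_of_hasDerivWithinAt_Ici {E : Type*} [NormedAddCommGroup E] [NormedSpace ℂ E]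
    {f : ℝ → E} {c : ℂ} (hf : ∀ s ∈ Ici (0 : ℝ), HasDerivWithinAt f (c • f s) (Ici 0) s)
    {t : ℝ} (ht : 0 ≤ t) : f t = Complex.exp (c * t) • f 0 := by
  set g : ℝ → E := fun s ↦ Complex.exp (-c * s) • f s
  have hg : ∀ s ∈ Ici (0 : ℝ), HasDerivWithinAt g 0 (Ici 0) s := by
    intro s hs
    have hexp : HasDerivAt (fun s : ℝ ↦ Complex.exp (-c * s)) (Complex.exp (-c * s) * -c) s := by
      simpa using ((Complex.ofRealCLM.hasDerivAt (x := s)).const_mul (-c)).cexp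
    refine (hexp.hasDerivWithinAt.smul (hf s hs)).congr_deriv ?_
    rw [smul_smul, ← add_smul]
    ring_nf
    simp
  have hconst : g t = g 0 :=
    constant_of_has_deriv_right_zero
      (fun s hs ↦ (hg s hs.1).continuousWithinAt.mono Icc_subset_Ici_self)
      (fun s hs ↦ (hg s hs.1).mono (Ici_subset_Ici.2 hs.1)) t ⟨ht, le_rfl⟩
  simpa [g, smul_smul, ← Complex.exp_add] using congrArg (Complex.exp (c * t) • ·) hconst

theorem hasDerivWithinAt_sub_mul_of_ode {y y' : ℝ → ℂ} {y'' p q : ℂ} {s : Set ℝ} {u : ℝ}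
    (hy : HasDerivWithinAt y (y' u) s u) (hy' : HasDerivWithinAt y' y'' s u)
    (hode : y'' - (p + q) * y' u + p * q * y u = 0) :
    HasDerivWithinAt (fun v ↦ y' v - p * y v) (q * (y' u - p * y u)) s u :=
  (hy'.sub (hy.const_mul p)).congr_deriv (by linear_combination hode)

theorem sub_mul_derivWithin_eq_of_ode {y : ℝ → ℂ} {p q : ℂ} (hy : ContDiffOn ℝ 2 y (Ici 0))
    (hode : ∀ u ∈ Ici (0 : ℝ), derivWithin (derivWithin y (Ici 0)) (Ici 0) u
      - (p + q) * derivWithin y (Ici 0) u + p * q * y u = 0)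
    {t : ℝ} (ht : 0 ≤ t) :
    (p - q) * derivWithin y (Ici 0) t =
      p * Complex.exp (p * t) * (derivWithin y (Ici 0) 0 - q * y 0)
        - q * Complex.exp (q * t) * (derivWithin y (Ici 0) 0 - p * y 0) := by
  set y' := derivWithin y (Ici 0)
  have hy₁ : ∀ u ∈ Ici (0 : ℝ), HasDerivWithinAt y (y' u) (Ici 0) u := fun u hu ↦
    ((hy.differentiableOn (by norm_num)) u hu).hasDerivWithinAt
  have hy₂ : ∀ u ∈ Ici (0 : ℝ), HasDerivWithinAt y' (derivWithin y' (Ici 0) u) (Ici 0) u :=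
    fun u hu ↦ (((hy.derivWithin (uniqueDiffOn_Ici 0) (by norm_num)).differentiableOn
      one_ne_zero) u hu).hasDerivWithinAt
  have hw := eq_exp_smul_of_hasDerivWithinAt_Ici (f := fun v ↦ y' v - q * y v) (c := p)
    (fun u hu ↦ hasDerivWithinAt_sub_mul_of_ode (hy₁ u hu) (hy₂ u hu)
      (by linear_combination hode u hu)) ht
  have hv := eq_exp_smul_of_hasDerivWithinAt_Ici (f := fun v ↦ y' v - p * y v) (c := q)
    (fun u hu ↦ hasDerivWithinAt_sub_mul_of_ode (hy₁ u hu) (hy₂ u hu) (hode u hu)) ht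
  simp only [smul_eq_mul] at hw hv
  linear_combination p * hw - q * hv

theorem abs_sub_mul_norm_derivWithin_le_of_ode {y : ℝ → ℂ} {p q : ℝ} (hy : ContDiffOn ℝ 2 y (Ici 0))
    (hode : ∀ u ∈ Ici (0 : ℝ), derivWithin (derivWithin y (Ici 0)) (Ici 0) u
      - (p + q) * derivWithin y (Ici 0) u + p * q * y u = 0)
    {t : ℝ} (ht : 0 ≤ t) :
    |p - q| * ‖derivWithin y (Ici 0) t‖ ≤
      |p| * Real.exp (p * t) * (‖derivWithin y (Ici 0) 0‖ + |q| * ‖y 0‖)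
        + |q| * Real.exp (q * t) * (‖derivWithin y (Ici 0) 0‖ + |p| * ‖y 0‖) := by
  have h := congrArg norm (sub_mul_derivWithin_eq_of_ode hy hode ht)
  have hnorm : ∀ r : ℝ, ‖Complex.exp (r * t)‖ = Real.exp (r * t) := fun r ↦ by
    rw [← Complex.ofReal_mul, Complex.norm_exp_ofReal]
  rw [← Complex.ofReal_sub, norm_mul, Complex.norm_real, Real.norm_eq_abs] at h
  rw [h]
  refine (norm_sub_le _ _).trans ?_
  simp only [norm_mul, Complex.norm_real, Real.norm_eq_abs, hnorm]
  gcongr <;> exact (norm_sub_le _ _).trans (by rw [norm_mul, Complex.norm_real, Real.norm_eq_abs])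

theorem sub_mul_le_of_neg_roots {b p q t X a₀ a₁ : ℝ} (hb : 0 < b) (hqp : q ≤ p) (hp : p < 0)
    (hpq : p + q = -b) (ht : 0 ≤ t) (ha₀ : 0 ≤ a₀) (ha₁ : 0 ≤ a₁)
    (hX : |p - q| * X ≤ |p| * Real.exp (p * t) * (a₁ + |q| * a₀)
      + |q| * Real.exp (q * t) * (a₁ + |p| * a₀)) :
    (p - q) * X ≤
      (2 / b + 2 + b) * (p * q * Real.exp (p * t) * (a₀ + a₁) + Real.exp (q * t) * a₁) := by
  rw [abs_of_nonneg (sub_nonneg.2 hqp), abs_of_neg hp, abs_of_neg (hqp.trans_lt hp)] at hX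
  have hpq₀ : 0 ≤ p * q := mul_nonneg_of_nonpos_of_nonpos hp.le (by linarith)
  have hexp : Real.exp (q * t) ≤ Real.exp (p * t) := by gcongr
  -- after dividing by `-p > 0` this is `b ≤ -2q`, i.e. `q ≤ p`
  have hp_le : -p ≤ 2 / b * (p * q) := by
    rw [div_mul_eq_mul_div, le_div_iff₀ hb]; nlinarith
  have hq_le : -q ≤ b := by linarith
  have e₁ := Real.exp_pos (p * t)
  have e₂ := Real.exp_pos (q * t)
  calc (p - q) * X
      ≤ -p * Real.exp (p * t) * a₁ + p * q * Real.exp (p * t) * a₀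
        + -q * Real.exp (q * t) * a₁ + p * q * Real.exp (q * t) * a₀ := by linarith
    _ ≤ 2 / b * (p * q) * Real.exp (p * t) * a₁ + p * q * Real.exp (p * t) * a₀
        + b * Real.exp (q * t) * a₁ + p * q * Real.exp (p * t) * a₀ := by gcongr
    _ ≤ (2 / b + 2 + b) * (p * q * Real.exp (p * t) * (a₀ + a₁) + Real.exp (q * t) * a₁) := by
        have : 0 ≤ 2 / b := by positivity
        nlinarith [mul_nonneg (mul_nonneg hpq₀ e₁.le) ha₀, mul_nonneg (mul_nonneg hpq₀ e₁.le) ha₁,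
          mul_nonneg e₂.le ha₁]

theorem sq_sub_mul_sq_le_of_neg_roots {b p q t X a₀ a₁ : ℝ} (hb : 0 < b) (hqp : q ≤ p) (hp : p < 0)
    (hpq : p + q = -b) (ht : 0 ≤ t) (hX₀ : 0 ≤ X) (ha₀ : 0 ≤ a₀) (ha₁ : 0 ≤ a₁)
    (hX : |p - q| * X ≤ |p| * Real.exp (p * t) * (a₁ + |q| * a₀)
      + |q| * Real.exp (q * t) * (a₁ + |p| * a₀)) :
    (p - q) ^ 2 * X ^ 2 ≤ 4 * (2 / b + 2 + b) ^ 2 *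
      (Real.exp (p * t) ^ 2 * (p * q) ^ 2 * (a₀ ^ 2 + a₁ ^ 2) + Real.exp (q * t) ^ 2 * a₁ ^ 2) := by
  have hlin := sub_mul_le_of_neg_roots hb hqp hp hpq ht ha₀ ha₁ hX
  calc (p - q) ^ 2 * X ^ 2 = ((p - q) * X) ^ 2 := by ring
    _ ≤ ((2 / b + 2 + b) * (p * q * Real.exp (p * t) * (a₀ + a₁) + Real.exp (q * t) * a₁)) ^ 2 :=
        pow_le_pow_left₀ (mul_nonneg (by linarith) hX₀) hlin 2
    _ ≤ (2 / b + 2 + b) ^ 2 * (2 * ((p * q * Real.exp (p * t)) ^ 2 * (2 * (a₀ ^ 2 + a₁ ^ 2))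
          + (Real.exp (q * t) * a₁) ^ 2)) := by
        rw [mul_pow]
        gcongr
        refine add_sq_le.trans ?_
        rw [mul_pow]
        gcongr
        exact add_sq_le
    _ ≤ _ := by
        nlinarith [mul_nonneg (sq_nonneg (2 / b + 2 + b)) (sq_nonneg (Real.exp (q * t) * a₁))]

/-- Small-frequency estimate for the time derivative: for `0 < Λ < (b²/4 - m)/2` and any
C² solution `y` of `y'' + b y' + (Λ + m) y = 0` on `[0,∞)`, one has
`|y'(t)|² ≤ C e^{(-b+√(b²-4m-4Λ))t} (Λ+m)² (|y(0)|² + |y'(0)|²)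
          + C e^{(-b-√(b²-4m-4Λ))t} |y'(0)|²` with `C = C(b,m)`. -/
theorem stmt_4 (b m : ℝ) (hb : 0 < b) (hm : 0 ≤ m) (hbm : 4 * m < b ^ 2) :
    ∃ C : ℝ, 0 < C ∧ ∀ Λ : ℝ, 0 < Λ → Λ < (b ^ 2 / 4 - m) / 2 →
      ∀ y : ℝ → ℂ, ContDiffOn ℝ 2 y (Set.Ici 0) →
      (∀ t ∈ Set.Ici (0 : ℝ),
        derivWithin (derivWithin y (Set.Ici 0)) (Set.Ici 0) t
          + (b : ℂ) * derivWithin y (Set.Ici 0) t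
          + ((Λ : ℂ) + (m : ℂ)) * y t = 0) →
      ∀ t : ℝ, 0 < t →
        ‖derivWithin y (Set.Ici 0) t‖ ^ 2 ≤
          C * Real.exp ((-b + Real.sqrt (b ^ 2 - 4 * m - 4 * Λ)) * t) * (Λ + m) ^ 2 *
            (‖y 0‖ ^ 2
              + ‖derivWithin y (Set.Ici 0) 0‖ ^ 2)
          + C * Real.exp ((-b - Real.sqrt (b ^ 2 - 4 * m - 4 * Λ)) * t) *
              ‖derivWithin y (Set.Ici 0) 0‖ ^ 2 := by
  have hgap : 0 < b ^ 2 - 4 * m := by linarith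
  refine ⟨8 * (2 / b + 2 + b) ^ 2 / (b ^ 2 - 4 * m), by positivity, ?_⟩
  intro Λ hΛ hΛm y hy hode t ht
  set δ := √(b ^ 2 - 4 * m - 4 * Λ)
  have hδsq : δ ^ 2 = b ^ 2 - 4 * m - 4 * Λ := Real.sq_sqrt (by linarith)
  have hδ : 0 < δ := Real.sqrt_pos.2 (by linarith)
  have hδb : δ < b := by nlinarith
  set p := (-b + δ) / 2 with hp
  set q := (-b - δ) / 2 with hq
  have hpq : p * q = Λ + m := by linear_combination -hδsq / 4
  have hexp : ∀ r : ℝ, Real.exp (r / 2 * t) ^ 2 = Real.exp (r * t) := fun r ↦ by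
    rw [← Real.exp_nat_mul]; ring_nf
  have hsumC : (p : ℂ) + q = -b := by simp only [p, q]; push_cast; ring
  have hpqC : (p : ℂ) * q = Λ + m := by exact_mod_cast hpq
  have hbound := abs_sub_mul_norm_derivWithin_le_of_ode hy (p := p) (q := q) (fun u hu ↦ by
    linear_combination hode u hu - derivWithin y (Ici 0) u * hsumC + y u * hpqC) ht.le
  have hsq := sq_sub_mul_sq_le_of_neg_roots hb (by linarith) (by linarith) (by linarith) ht.le
    (norm_nonneg _) (norm_nonneg _) (norm_nonneg _) hbound
  rw [show p - q = δ by ring, hpq, hexp, hexp] at hsq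
  set R := Real.exp ((-b + δ) * t) * (Λ + m) ^ 2 * (‖y 0‖ ^ 2 + ‖derivWithin y (Ici 0) 0‖ ^ 2)
    + Real.exp ((-b - δ) * t) * ‖derivWithin y (Ici 0) 0‖ ^ 2 with hR
  calc ‖derivWithin y (Ici 0) t‖ ^ 2 ≤ 4 * (2 / b + 2 + b) ^ 2 * R / δ ^ 2 := by
        rw [le_div_iff₀ (by positivity)]; linarith
    _ ≤ 4 * (2 / b + 2 + b) ^ 2 * R / ((b ^ 2 - 4 * m) / 2) := by gcongr; linarith
    _ = _ := by rw [hR]; field_simp; ring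
end

section
/- Let $b>0$ and $m\geq 0$ satisfy $b^2>4m$. Then there exists a constant $C>0$, depending only on $b$ and $m$, such that for every real number $\Lambda$ with $\Lambda>\tfrac12\left(\tfrac{b^2}{4}-m\right)$, every twice continuously differentiable function $y:[0,\infty)\to\mathbb{C}$ satisfying $y''(t)+b\,y'(t)+(\Lambda+m)\,y(t)=0$ for all $t\geq 0$, and every $t>0$, one has $|y'(t)|^2\leq C\,e^{\left(-b+\sqrt{\frac12(b^2-4m)}\right)t}\left((\Lambda+m)|y(0)|^2+|y'(0)|^2\right)$. -/
/-!
Write `X² + bX + (Λ + m) = (X + a)(X + c) + ω` with `a, c = (b ∓ δ)/2`, `δ = √((b² - 4m)/2)`;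
then `ω = Λ - (b²/4 - m)/2 > 0`. Along a solution, `‖y' + a y‖² + ω‖y‖²` has derivative
`-2(c‖y' + a y‖² + aω‖y‖²)`, and symmetrically with `a` and `c` exchanged, so the sum `F` of the
two energies decays like `e^{-2at} = e^{(-b+δ)t}`. As `(c - a) y' = c (y' + a y) - a (y' + c y)`,
`δ²‖y'‖² ≤ (a² + c²) F` with no dependence on `ω`, i.e. on `Λ`; finally
`F(0) ≤ 18 ((Λ + m)‖y 0‖² + ‖y' 0‖²)` because `b² < 8(Λ + m)`.
-/

open Real Set

theorem le_mul_exp_of_hasDerivWithinAt_le_mul {f f' : ℝ → ℝ} {K t₀ : ℝ}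
    (hf : ∀ x ∈ Ici t₀, HasDerivWithinAt f (f' x) (Ici t₀) x)
    (bound : ∀ x ∈ Ici t₀, f' x ≤ K * f x) {t : ℝ} (ht : t₀ ≤ t) :
    f t ≤ f t₀ * exp (K * (t - t₀)) := by
  have hgron := le_gronwallBound_of_liminf_deriv_right_le (f := f) (f' := f') (δ := f t₀) (K := K)
    (ε := 0) (a := t₀) (b := t)
    (fun x hx => (hf x hx.1).continuousWithinAt.mono (Icc_subset_Ici_self))
    (fun x hx _ hr => ((hf x hx.1).mono (Ici_subset_Ici.2 hx.1)).liminf_right_slope_le hr)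
    le_rfl (fun x hx => by simpa using bound x hx.1) t ⟨ht, le_rfl⟩
  rwa [gronwallBound_ε0] at hgron

section FactoredEnergy

variable {E : Type*} [NormedAddCommGroup E] [InnerProductSpace ℝ E]

/-- For `a + c = b` and `a c + ω = L` this is the energy of `y'' + b y' + L y = 0` adapted to the
factorization `D² + bD + L = (D + a)(D + c) + ω`, evaluated at `u = y t`, `v = y' t`. -/
def factoredEnergy (a c ω : ℝ) (u v : E) : ℝ :=
  ‖v + a • u‖ ^ 2 + ‖v + c • u‖ ^ 2 + 2 * ω * ‖u‖ ^ 2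

theorem sq_sub_mul_norm_sq_le_factoredEnergy {a c ω : ℝ} (hω : 0 ≤ ω) (u v : E) :
    (c - a) ^ 2 * ‖v‖ ^ 2 ≤ (a ^ 2 + c ^ 2) * factoredEnergy a c ω u v := by
  have hv : (c - a) • v = c • (v + a • u) - a • (v + c • u) := by
    simp only [smul_add, smul_smul, mul_comm c a, sub_smul]; abel
  have hnorm : |c - a| * ‖v‖ ≤ |c| * ‖v + a • u‖ + |a| * ‖v + c • u‖ := by
    have h := norm_sub_le (c • (v + a • u)) (a • (v + c • u))
    rwa [← hv, norm_smul, norm_smul, norm_smul, Real.norm_eq_abs, Real.norm_eq_abs,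
      Real.norm_eq_abs] at h
  have := pow_le_pow_left₀ (by positivity) hnorm 2
  rw [mul_pow, sq_abs] at this
  unfold factoredEnergy
  nlinarith [sq_nonneg (|c| * ‖v + c • u‖ - |a| * ‖v + a • u‖), sq_abs a, sq_abs c,
    mul_nonneg (mul_nonneg (add_nonneg (sq_nonneg a) (sq_nonneg c)) hω) (sq_nonneg ‖u‖)]

theorem factoredEnergy_le (a c ω : ℝ) (u v : E) :
    factoredEnergy a c ω u v ≤ 4 * ‖v‖ ^ 2 + 2 * (a ^ 2 + c ^ 2 + ω) * ‖u‖ ^ 2 := by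
  have key : ∀ r : ℝ, ‖v + r • u‖ ^ 2 ≤ 2 * ‖v‖ ^ 2 + 2 * r ^ 2 * ‖u‖ ^ 2 := by
    intro r
    have h := norm_add_le v (r • u)
    rw [norm_smul, Real.norm_eq_abs] at h
    nlinarith [sq_nonneg (‖v‖ - |r| * ‖u‖), sq_abs r, norm_nonneg (v + r • u)]
  unfold factoredEnergy
  linarith [key a, key c]

variable {y y' y'' : ℝ → E} {s : Set ℝ} {x b L a c ω : ℝ}

theorem hasDerivWithinAt_norm_sq_add_smul_add_mul_norm_sq
    (hy : HasDerivWithinAt y (y' x) s x) (hy' : HasDerivWithinAt y' (y'' x) s x)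
    (hode : y'' x + b • y' x + L • y x = 0) (hb : a + c = b) (hL : a * c + ω = L) :
    HasDerivWithinAt (fun t => ‖y' t + a • y t‖ ^ 2 + ω * ‖y t‖ ^ 2)
      (-2 * (c * ‖y' x + a • y x‖ ^ 2 + a * ω * ‖y x‖ ^ 2)) s x := by
  have hy'' : y'' x = -(b • y' x) - L • y x := by
    rw [← sub_eq_zero, ← hode]; abel
  refine ((hy'.add (hy.const_smul a)).norm_sq.add (hy.norm_sq.const_mul ω)).congr_deriv ?_
  rw [hy'', ← hb, ← hL, norm_add_sq_real, norm_smul, Real.norm_eq_abs, mul_pow, sq_abs]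
  simp only [Pi.add_apply, Pi.smul_apply, inner_add_left, inner_add_right, inner_sub_right,
    inner_neg_right, inner_smul_left, inner_smul_right, real_inner_self_eq_norm_sq,
    real_inner_comm (y x) (y' x), RCLike.conj_to_real]
  ring

theorem factoredEnergy_le_mul_exp {t₀ : ℝ}
    (hy : ∀ x ∈ Ici t₀, HasDerivWithinAt y (y' x) (Ici t₀) x)
    (hy' : ∀ x ∈ Ici t₀, HasDerivWithinAt y' (y'' x) (Ici t₀) x)
    (hode : ∀ x ∈ Ici t₀, y'' x + b • y' x + L • y x = 0) (hb : a + c = b) (hL : a * c + ω = L)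
    (hac : a ≤ c) (hω : 0 ≤ ω) {t : ℝ} (ht : t₀ ≤ t) :
    factoredEnergy a c ω (y t) (y' t) ≤
      factoredEnergy a c ω (y t₀) (y' t₀) * exp (-(2 * a) * (t - t₀)) := by
  refine le_mul_exp_of_hasDerivWithinAt_le_mul (f := fun t => factoredEnergy a c ω (y t) (y' t))
    (f' := fun x => -2 * (c * ‖y' x + a • y x‖ ^ 2 + a * ω * ‖y x‖ ^ 2)
      + -2 * (a * ‖y' x + c • y x‖ ^ 2 + c * ω * ‖y x‖ ^ 2)) (fun x hx => ?_) (fun x hx => ?_) ht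
  · have hsum := (hasDerivWithinAt_norm_sq_add_smul_add_mul_norm_sq (hy x hx) (hy' x hx)
      (hode x hx) hb hL).add (hasDerivWithinAt_norm_sq_add_smul_add_mul_norm_sq (hy x hx)
      (hy' x hx) (hode x hx) ((add_comm c a).trans hb) ((mul_comm c a ▸ hL)))
    refine hsum.congr_of_mem (fun t _ => ?_) hx
    simp only [factoredEnergy, Pi.add_apply]; ring
  · simp only [factoredEnergy]
    nlinarith [mul_le_mul_of_nonneg_right hac (sq_nonneg ‖y' x + a • y x‖),
      mul_le_mul_of_nonneg_right hac (mul_nonneg hω (sq_nonneg ‖y x‖))]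

end FactoredEnergy

theorem stmt_5_general (b m : ℝ) (hm : 0 ≤ m) (hbm : 4 * m < b ^ 2) :
    ∃ C : ℝ, 0 < C ∧ ∀ Λ : ℝ, (b ^ 2 / 4 - m) / 2 < Λ →
      ∀ y : ℝ → ℂ, ContDiffOn ℝ 2 y (Set.Ici 0) →
      (∀ t ∈ Set.Ici (0 : ℝ),
        derivWithin (derivWithin y (Set.Ici 0)) (Set.Ici 0) t
          + (b : ℂ) * derivWithin y (Set.Ici 0) t
          + ((Λ : ℂ) + (m : ℂ)) * y t = 0) →
      ∀ t : ℝ, 0 < t →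
        ‖derivWithin y (Set.Ici 0) t‖ ^ 2 ≤
          C * Real.exp ((-b + Real.sqrt ((b ^ 2 - 4 * m) / 2)) * t) *
            ((Λ + m) * ‖y 0‖ ^ 2
              + ‖derivWithin y (Set.Ici 0) 0‖ ^ 2) := by
  set δ := √((b ^ 2 - 4 * m) / 2)
  have hδsq : δ ^ 2 = (b ^ 2 - 4 * m) / 2 := Real.sq_sqrt (by linarith)
  have hδ : 0 < δ := Real.sqrt_pos.2 (by linarith)
  set a := (b - δ) / 2
  set c := (b + δ) / 2
  have hδca : c - a = δ := by ring
  have hac : 0 < a ^ 2 + c ^ 2 := by nlinarith [sq_nonneg (a + c)]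
  refine ⟨18 * (a ^ 2 + c ^ 2) / δ ^ 2, by positivity, fun Λ hΛ y hy hode t ht => ?_⟩
  set ω := Λ - (b ^ 2 / 4 - m) / 2 with hω
  have hω0 : 0 ≤ ω := by linarith
  set y' := derivWithin y (Ici 0)
  have hy' : ∀ x ∈ Ici (0 : ℝ), HasDerivWithinAt y (y' x) (Ici 0) x := fun x hx =>
    ((hy.differentiableOn two_ne_zero) x hx).hasDerivWithinAt
  have hy'' : ∀ x ∈ Ici (0 : ℝ), HasDerivWithinAt y' (derivWithin y' (Ici 0) x) (Ici 0) x :=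
    fun x hx => (((hy.derivWithin (uniqueDiffOn_Ici 0) (m := 1) (by norm_num)).differentiableOn
      one_ne_zero) x hx).hasDerivWithinAt
  have hode' : ∀ x ∈ Ici (0 : ℝ),
      derivWithin y' (Ici 0) x + b • y' x + (Λ + m) • y x = 0 := fun x hx => by
    simpa only [Complex.real_smul, Complex.ofReal_add] using hode x hx
  have hdecay := factoredEnergy_le_mul_exp (a := a) (c := c) (ω := ω) hy' hy'' hode'
    (by ring) (by linear_combination (-1 / 4) * hδsq) (by linarith) hω0 ht.le
  have hdiff := sq_sub_mul_norm_sq_le_factoredEnergy (a := a) (c := c) hω0 (y t) (y' t)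
  have hinit : factoredEnergy a c ω (y 0) (y' 0) ≤ 18 * ((Λ + m) * ‖y 0‖ ^ 2 + ‖y' 0‖ ^ 2) := by
    refine (factoredEnergy_le a c ω (y 0) (y' 0)).trans ?_
    have hcoef : a ^ 2 + c ^ 2 + ω ≤ 9 * (Λ + m) := by
      nlinarith [show a ^ 2 + c ^ 2 = (b ^ 2 + δ ^ 2) / 2 by ring]
    nlinarith [mul_le_mul_of_nonneg_right hcoef (sq_nonneg ‖y 0‖)]
  calc ‖y' t‖ ^ 2 = (c - a) ^ 2 * ‖y' t‖ ^ 2 / δ ^ 2 := by rw [hδca]; field_simp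
    _ ≤ (a ^ 2 + c ^ 2) * factoredEnergy a c ω (y t) (y' t) / δ ^ 2 :=
          div_le_div_of_nonneg_right hdiff (by positivity)
    _ ≤ (a ^ 2 + c ^ 2) * (18 * ((Λ + m) * ‖y 0‖ ^ 2 + ‖y' 0‖ ^ 2) * exp (-(2 * a) * (t - 0)))
          / δ ^ 2 := by
          gcongr; exact hdecay.trans (mul_le_mul_of_nonneg_right hinit (exp_pos _).le)
    _ = _ := by rw [show -(2 * a) * (t - 0) = (-b + δ) * t by ring]; ring

/-- Large-frequency estimate for the time derivative: for `Λ > (b²/4 - m)/2` and any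
C² solution `y` of `y'' + b y' + (Λ + m) y = 0` on `[0,∞)`, one has
`|y'(t)|² ≤ C e^{(-b+√(½(b²-4m)))t} ((Λ+m)|y(0)|² + |y'(0)|²)` with `C = C(b,m)`. -/
theorem stmt_5 (b m : ℝ) (hb : 0 < b) (hm : 0 ≤ m) (hbm : 4 * m < b ^ 2) :
    ∃ C : ℝ, 0 < C ∧ ∀ Λ : ℝ, (b ^ 2 / 4 - m) / 2 < Λ →
      ∀ y : ℝ → ℂ, ContDiffOn ℝ 2 y (Set.Ici 0) →
      (∀ t ∈ Set.Ici (0 : ℝ),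
        derivWithin (derivWithin y (Set.Ici 0)) (Set.Ici 0) t
          + (b : ℂ) * derivWithin y (Set.Ici 0) t
          + ((Λ : ℂ) + (m : ℂ)) * y t = 0) →
      ∀ t : ℝ, 0 < t →
        ‖derivWithin y (Set.Ici 0) t‖ ^ 2 ≤
          C * Real.exp ((-b + Real.sqrt ((b ^ 2 - 4 * m) / 2)) * t) *
            ((Λ + m) * ‖y 0‖ ^ 2
              + ‖derivWithin y (Set.Ici 0) 0‖ ^ 2) :=
  stmt_5_general b m hm hbm
end

section
/- Let $b>0$ and $m\geq 0$ satisfy $b^2>4m$. Then there exists a constant $C>0$, depending only on $b$ and $m$, such that for every real number $\Lambda>0$, every twice continuously differentiable function $y:[0,\infty)\to\mathbb{C}$ satisfying $y''(t)+b\,y'(t)+(\Lambda+m)\,y(t)=0$ for all $t\geq 0$, and every $t>0$, one has $|y(t)|^2\leq C\,e^{\left(-b+\sqrt{b^2-m}\right)t}\left(|y(0)|^2+|y'(0)|^2\right)$. -/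
/-!
Write `r, r'` for the roots of `z² + b z + (Λ + m)`, with `Re r' ≤ Re r`. Factoring the equation
as `(d/dt - r')(d/dt - r) y = 0` gives the exact formula
`y t = e^{r t} (y 0 + (y' 0 - r y 0) ∫₀ᵗ e^{(r' - r) u} du)`,
and the integral is bounded both by `t` and by `2 / |r' - r|`. If the roots are close,
`|r' - r| ≤ b/2`, then `|r|` is bounded and `2 Re r ≤ -b/2` lies strictly below the target rate,
so the secular factor `t` is absorbed by the exponential gap. Otherwise `|r| ≲ |r' - r|` and
`1/|r' - r| ≲ 1/b`, and only `2 Re r ≤ -b + √(b² - m)`, read off from the discriminant, is needed.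
-/

open Set
open scoped Complex

theorem eq_of_hasDerivWithinAt_zero_Ici {E : Type*} [NormedAddCommGroup E] [NormedSpace ℝ E]
    {f : ℝ → E} {a : ℝ} (hf : ∀ x ∈ Ici a, HasDerivWithinAt f 0 (Ici a) x) {x : ℝ} (hx : a ≤ x) :
    f x = f a :=
  constant_of_has_deriv_right_zero
    (fun z hz => (hf z hz.1).continuousWithinAt.mono Icc_subset_Ici_self)
    (fun z hz => (hf z hz.1).mono (Ici_subset_Ici.2 hz.1)) x ⟨hx, le_rfl⟩

theorem hasDerivAt_cexp_mul_ofReal (c : ℂ) (t : ℝ) :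
    HasDerivAt (fun u : ℝ => cexp (c * u)) (c * cexp (c * t)) t := by
  simpa [mul_comm] using (((hasDerivAt_id (t : ℂ)).const_mul c).cexp).comp_ofReal

theorem eq_cexp_mul_of_hasDerivWithinAt_Ici {w : ℝ → ℂ} {c : ℂ}
    (hw : ∀ t ∈ Ici (0 : ℝ), HasDerivWithinAt w (c * w t) (Ici 0) t) {t : ℝ} (ht : 0 ≤ t) :
    w t = cexp (c * t) * w 0 := by
  have hconst : cexp (-c * t) * w t = cexp (-c * (0 : ℝ)) * w 0 :=
    eq_of_hasDerivWithinAt_zero_Ici (f := fun u : ℝ => cexp (-c * u) * w u) (fun u hu =>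
      (((hasDerivAt_cexp_mul_ofReal (-c) u).hasDerivWithinAt).fun_mul (hw u hu)).congr_deriv
        (by ring)) ht
  rw [Complex.ofReal_zero, mul_zero, Complex.exp_zero, one_mul] at hconst
  rw [← hconst, ← mul_assoc, ← Complex.exp_add]
  simp

theorem eq_cexp_mul_of_ode {p q r r' : ℂ} (hsum : r + r' = -p) (hprod : r * r' = q)
    {y : ℝ → ℂ} (hy : ContDiffOn ℝ 2 y (Ici 0))
    (hode : ∀ t ∈ Ici (0 : ℝ), derivWithin (derivWithin y (Ici 0)) (Ici 0) t
      + p * derivWithin y (Ici 0) t + q * y t = 0)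
    {t : ℝ} (ht : 0 ≤ t) :
    y t = cexp (r * t) * (y 0 + (derivWithin y (Ici 0) 0 - r * y 0) *
      ∫ u in (0 : ℝ)..t, cexp ((r' - r) * u)) := by
  set y' := derivWithin y (Ici 0)
  have hy' : ∀ t ∈ Ici (0 : ℝ), HasDerivWithinAt y (y' t) (Ici 0) t := fun t ht =>
    (hy.differentiableOn (by norm_num) t ht).hasDerivWithinAt
  have hy'_smooth : ContDiffOn ℝ 1 y' (Ici 0) := hy.derivWithin (uniqueDiffOn_Ici 0) (by norm_num)
  have hy'' : ∀ t ∈ Ici (0 : ℝ), HasDerivWithinAt y' (derivWithin y' (Ici 0) t) (Ici 0) t :=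
    fun t ht => (hy'_smooth.differentiableOn (by norm_num) t ht).hasDerivWithinAt
  set w₀ := y' 0 - r * y 0
  have hw : ∀ t ∈ Ici (0 : ℝ), y' t - r * y t = cexp (r' * t) * w₀ := by
    refine fun t ht => eq_cexp_mul_of_hasDerivWithinAt_Ici (w := fun t => y' t - r * y t)
      (fun u hu => ?_) ht
    refine ((hy'' u hu).fun_sub ((hy' u hu).const_mul r)).congr_deriv ?_
    linear_combination hode u hu - y' u * hsum + y u * hprod
  have hF : ∀ u ∈ Ici (0 : ℝ), HasDerivWithinAt
      (fun u : ℝ => cexp (-r * u) * y u - w₀ * ∫ v in (0 : ℝ)..u, cexp ((r' - r) * v))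
      0 (Ici 0) u := by
    intro u hu
    have hint := (Continuous.integral_hasStrictDerivAt (by fun_prop :
      Continuous fun v : ℝ => cexp ((r' - r) * v)) 0 u).hasDerivAt.hasDerivWithinAt
        (s := Ici 0)
    refine ((((hasDerivAt_cexp_mul_ofReal (-r) u).hasDerivWithinAt).fun_mul (hy' u hu)).fun_sub
      (hint.const_mul w₀)).congr_deriv ?_
    have hexp : cexp (-r * u) * cexp (r' * u) = cexp ((r' - r) * u) := by
      rw [← Complex.exp_add]; ring_nf
    linear_combination cexp (-r * u) * hw u hu + w₀ * hexp
  have hconst := eq_of_hasDerivWithinAt_zero_Ici hF ht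
  simp only [Complex.ofReal_zero, mul_zero, Complex.exp_zero, one_mul,
    intervalIntegral.integral_same, sub_zero] at hconst
  rw [← hconst, sub_add_cancel, ← mul_assoc, ← Complex.exp_add]
  simp

theorem norm_integral_cexp_mul_le {c : ℂ} (hc : c.re ≤ 0) {t : ℝ} (ht : 0 ≤ t) :
    ‖∫ u in (0 : ℝ)..t, cexp (c * u)‖ ≤ t := by
  have hle : ∀ u ∈ uIoc (0 : ℝ) t, ‖cexp (c * u)‖ ≤ 1 := fun u hu => by
    rw [uIoc_of_le ht] at hu
    rw [Complex.norm_exp, Complex.re_mul_ofReal, Real.exp_le_one_iff]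
    exact mul_nonpos_of_nonpos_of_nonneg hc hu.1.le
  simpa [abs_of_nonneg ht] using intervalIntegral.norm_integral_le_of_norm_le_const hle

theorem norm_integral_cexp_mul_le_two_div {c : ℂ} (hc : c.re ≤ 0) (hc₀ : c ≠ 0) {t : ℝ}
    (ht : 0 ≤ t) : ‖∫ u in (0 : ℝ)..t, cexp (c * u)‖ ≤ 2 / ‖c‖ := by
  rw [integral_exp_mul_complex hc₀, norm_div]
  gcongr
  calc ‖cexp (c * t) - cexp (c * (0 : ℝ))‖ ≤ ‖cexp (c * t)‖ + ‖cexp (c * (0 : ℝ))‖ :=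
        norm_sub_le _ _
    _ ≤ 1 + 1 := by
        gcongr <;> rw [Complex.norm_exp, Complex.re_mul_ofReal, Real.exp_le_one_iff] <;>
          nlinarith
    _ = 2 := by norm_num

theorem norm_le_of_ode {p q r r' : ℂ} (hsum : r + r' = -p) (hprod : r * r' = q)
    {y : ℝ → ℂ} (hy : ContDiffOn ℝ 2 y (Ici 0))
    (hode : ∀ t ∈ Ici (0 : ℝ), derivWithin (derivWithin y (Ici 0)) (Ici 0) t
      + p * derivWithin y (Ici 0) t + q * y t = 0)
    {t : ℝ} (ht : 0 ≤ t) :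
    ‖y t‖ ≤ Real.exp (r.re * t) * (‖y 0‖ + (‖derivWithin y (Ici 0) 0‖ + ‖r‖ * ‖y 0‖) *
      ‖∫ u in (0 : ℝ)..t, cexp ((r' - r) * u)‖) := by
  rw [eq_cexp_mul_of_ode hsum hprod hy hode ht, norm_mul, Complex.norm_exp,
    Complex.re_mul_ofReal]
  gcongr
  refine (norm_add_le _ _).trans ?_
  rw [norm_mul]
  gcongr
  exact (norm_sub_le _ _).trans (by rw [norm_mul])

theorem Complex.exists_sq_eq_and_re_nonneg (z : ℂ) : ∃ s : ℂ, s ^ 2 = z ∧ 0 ≤ s.re := by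
  obtain ⟨s, hs⟩ := IsAlgClosed.exists_pow_nat_eq z two_pos
  rcases le_total 0 s.re with h | h
  · exact ⟨s, hs, h⟩
  · exact ⟨-s, by rw [neg_sq, hs], by simpa using h⟩

/-- For `D < 0` this holds because `s` is purely imaginary and `√D = 0`. -/
theorem Complex.re_le_sqrt_of_sq_eq_ofReal {s : ℂ} {D : ℝ} (hs : s ^ 2 = D) : s.re ≤ √D := by
  rcases le_or_gt s.re 0 with h | h
  · exact h.trans (Real.sqrt_nonneg D)
  have him : s.im = 0 := by
    have := congrArg Complex.im hs
    simp only [sq, Complex.mul_im, Complex.ofReal_im] at this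
    nlinarith
  have hre : s.re ^ 2 = D := by
    have := congrArg Complex.re hs
    simpa [sq, Complex.mul_re, him] using this
  rw [← hre, Real.sqrt_sq h.le]

theorem exp_mul_le_of_close {b t A B R ψ ρ E : ℝ} (hb : 0 < b) (ht : 0 ≤ t) (hA : 0 ≤ A)
    (hB : 0 ≤ B) (hR₀ : 0 ≤ R) (hR : R ≤ b) (hψ₀ : 0 ≤ ψ) (hψ : ψ ≤ t)
    (hρ : ρ ≤ E / 2 - b / 8) :
    Real.exp (ρ * t) * (A + (B + R * A) * ψ) ≤ Real.exp (E / 2 * t) * ((9 + 8 / b) * (A + B)) := by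
  set e := Real.exp (-(b / 8 * t))
  have he_le : e ≤ 1 := Real.exp_le_one_iff.2 (by nlinarith)
  have hte : t * e ≤ 8 / b := by
    have := (Real.mul_exp_neg_le_exp_neg_one (b / 8 * t)).trans
      (Real.exp_le_one_iff.2 (by norm_num))
    rw [le_div_iff₀ hb]
    nlinarith
  have hexp : Real.exp (ρ * t) ≤ Real.exp (E / 2 * t) * e := by
    rw [← Real.exp_add]
    gcongr
    nlinarith
  have hdecay : e * (A + (B + R * A) * ψ) ≤ A + (B + b * A) * (t * e) := by
    have : (B + R * A) * ψ ≤ (B + b * A) * t := by gcongr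
    nlinarith [Real.exp_pos (-(b / 8 * t))]
  calc Real.exp (ρ * t) * (A + (B + R * A) * ψ)
      ≤ Real.exp (E / 2 * t) * (e * (A + (B + R * A) * ψ)) := by
        rw [← mul_assoc]; gcongr
    _ ≤ Real.exp (E / 2 * t) * (A + (B + b * A) * (8 / b)) := by
        gcongr; exact hdecay.trans (by gcongr)
    _ ≤ Real.exp (E / 2 * t) * ((9 + 8 / b) * (A + B)) := by
        gcongr
        have : (B + b * A) * (8 / b) = 8 * A + 8 / b * B := by field_simp; ring
        nlinarith [div_pos (by norm_num : (0:ℝ) < 8) hb]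

theorem exp_mul_le_of_separated {b t A B R ψ ρ E σ : ℝ} (hb : 0 < b) (ht : 0 ≤ t)
    (hA : 0 ≤ A) (hB : 0 ≤ B) (hR₀ : 0 ≤ R) (hσ : b / 2 < σ) (hR : R ≤ (b + σ) / 2)
    (hψ₀ : 0 ≤ ψ) (hψ : ψ ≤ 2 / σ) (hρ : ρ ≤ E / 2) :
    Real.exp (ρ * t) * (A + (B + R * A) * ψ) ≤ Real.exp (E / 2 * t) * ((9 + 8 / b) * (A + B)) := by
  have hσ₀ : 0 < σ := by linarith
  have hRψ : R * ψ ≤ 3 := by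
    calc R * ψ ≤ (b + σ) / 2 * (2 / σ) := by gcongr
      _ = b / σ + 1 := by field_simp
      _ ≤ 3 := by rw [div_add_one hσ₀.ne', div_le_iff₀ hσ₀]; linarith
  have hψb : ψ ≤ 4 / b := hψ.trans (by rw [div_le_div_iff₀ hσ₀ hb]; linarith)
  gcongr
  have hBψ : B * ψ ≤ B * (4 / b) := by gcongr
  have hRψA : R * ψ * A ≤ 3 * A := by gcongr
  have : B * (4 / b) ≤ 8 / b * B := by rw [mul_comm]; gcongr; norm_num
  nlinarith [div_pos (by norm_num : (0:ℝ) < 8) hb]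

theorem sq_le_two_mul_sq_mul_exp {x E t K A B : ℝ} (hx : 0 ≤ x)
    (h : x ≤ Real.exp (E / 2 * t) * (K * (A + B))) :
    x ^ 2 ≤ 2 * K ^ 2 * Real.exp (E * t) * (A ^ 2 + B ^ 2) := by
  have hexp : Real.exp (E / 2 * t) ^ 2 = Real.exp (E * t) := by
    rw [← Real.exp_nat_mul]; ring_nf
  calc x ^ 2 ≤ (Real.exp (E / 2 * t) * (K * (A + B))) ^ 2 := by gcongr
    _ = K ^ 2 * Real.exp (E * t) * (A + B) ^ 2 := by rw [← hexp]; ring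
    _ ≤ K ^ 2 * Real.exp (E * t) * (2 * (A ^ 2 + B ^ 2)) := by
        gcongr; nlinarith [sq_nonneg (A - B)]
    _ = 2 * K ^ 2 * Real.exp (E * t) * (A ^ 2 + B ^ 2) := by ring

/-- Uniform-in-frequency estimate: for any `Λ > 0` and any C² solution `y` of
`y'' + b y' + (Λ + m) y = 0` on `[0,∞)`, one has
`|y(t)|² ≤ C e^{(-b+√(b²-m))t} (|y(0)|² + |y'(0)|²)` with `C = C(b,m)`. -/
theorem stmt_7 (b m : ℝ) (hb : 0 < b) (hm : 0 ≤ m) (hbm : 4 * m < b ^ 2) :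
    ∃ C : ℝ, 0 < C ∧ ∀ Λ : ℝ, 0 < Λ →
      ∀ y : ℝ → ℂ, ContDiffOn ℝ 2 y (Set.Ici 0) →
      (∀ t ∈ Set.Ici (0 : ℝ),
        derivWithin (derivWithin y (Set.Ici 0)) (Set.Ici 0) t
          + (b : ℂ) * derivWithin y (Set.Ici 0) t
          + ((Λ : ℂ) + (m : ℂ)) * y t = 0) →
      ∀ t : ℝ, 0 < t →
        ‖y t‖ ^ 2 ≤
          C * Real.exp ((-b + Real.sqrt (b ^ 2 - m)) * t) *
            (‖y 0‖ ^ 2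
              + ‖derivWithin y (Set.Ici 0) 0‖ ^ 2) := by
  refine ⟨2 * (9 + 8 / b) ^ 2, by positivity, fun Λ hΛ y hy hode t ht => ?_⟩
  obtain ⟨s, hs, hs_re⟩ := Complex.exists_sq_eq_and_re_nonneg ((b ^ 2 - 4 * (Λ + m) : ℝ) : ℂ)
  set r : ℂ := (-b + s) / 2
  have hy_le := norm_le_of_ode (r := r) (r' := (-b - s) / 2) (by ring)
    (by push_cast at hs; linear_combination (-1 / 4 : ℂ) * hs) hy hode ht.le
  rw [show (-b - s) / 2 - r = -s by ring] at hy_le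
  have hr_norm : ‖r‖ ≤ (b + ‖s‖) / 2 := by
    simpa [r, norm_div, abs_of_pos hb] using
      div_le_div_of_nonneg_right (norm_add_le (-b : ℂ) s) zero_le_two
  have hr_re : 2 * r.re = -b + s.re := by simp [r]; ring
  have hs_sqrt : s.re ≤ √(b ^ 2 - m) :=
    (Complex.re_le_sqrt_of_sq_eq_ofReal hs).trans (Real.sqrt_le_sqrt (by linarith))
  have hE : 3 * b / 4 ≤ √(b ^ 2 - m) := Real.le_sqrt_of_sq_le (by nlinarith)
  have hs_re' : (-s).re ≤ 0 := by simpa using hs_re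
  refine sq_le_two_mul_sq_mul_exp (norm_nonneg _) (hy_le.trans ?_)
  rcases le_or_gt ‖s‖ (b / 2) with hclose | hsep
  · exact exp_mul_le_of_close hb ht.le (norm_nonneg _) (norm_nonneg _) (norm_nonneg _)
      (by linarith) (norm_nonneg _) (norm_integral_cexp_mul_le hs_re' ht.le)
      (by linarith [Complex.re_le_norm s])
  · have hs₀ : -s ≠ 0 := neg_ne_zero.2 (norm_pos_iff.1 (by linarith))
    have hψ := norm_integral_cexp_mul_le_two_div hs_re' hs₀ ht.le
    rw [norm_neg] at hψ
    exact exp_mul_le_of_separated hb ht.le (norm_nonneg _) (norm_nonneg _) (norm_nonneg _) hsep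
      hr_norm (norm_nonneg _) hψ (by linarith)
end

section
/- Let $b>0$ and $m\geq 0$ satisfy $b^2>4m$. Then there exists a constant $C>0$, depending only on $b$ and $m$, such that for every real number $\Lambda>0$, every twice continuously differentiable function $y:[0,\infty)\to\mathbb{C}$ satisfying $y''(t)+b\,y'(t)+(\Lambda+m)\,y(t)=0$ for all $t\geq 0$, and every $t>0$, one has $|y'(t)|^2\leq C\,e^{\left(-b+\sqrt{b^2-m}\right)t}\left((\Lambda+m)|y(0)|^2+|y'(0)|^2\right)$. -/
/-!
With `δ = (b - √(b² - m)) / 2`, i.e. `m = 4δ(b - δ)`, the function `z = e^{δt} y` solves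
`z'' + √(b² - m) z' + (Λ + 3m/4) z = 0`. The damping is nonnegative, so the energy
`(Λ + 3m/4)|z|² + |z'|²` is nonincreasing. Writing it as
`e^{2δt} E(t)` with `E = (Λ + 3m/4)|y|² + |y' + δy|²`, the bound `δ² ≤ m/4` gives
`|y'(t)|² ≤ 2 E(t)` and `E(0) ≤ 2((Λ + m)|y(0)|² + |y'(0)|²)`, hence the claim with `C = 4`,
since `-b + √(b² - m) = -2δ`.
-/

open Set Real

theorem norm_add_sq_le_two_mul {F : Type*} [SeminormedAddCommGroup F] (x y : F) :
    ‖x + y‖ ^ 2 ≤ 2 * (‖x‖ ^ 2 + ‖y‖ ^ 2) :=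
  (pow_le_pow_left₀ (norm_nonneg _) (norm_add_le x y) 2).trans add_sq_le

section DampedOscillator

variable {E : Type*} [NormedAddCommGroup E] [InnerProductSpace ℝ E]

theorem antitoneOn_damped_energy {D : Set ℝ} (hD : Convex ℝ D) {β μ : ℝ} (hβ : 0 ≤ β)
    {z w : ℝ → E} (hz : ∀ t ∈ D, HasDerivWithinAt z (w t) D t)
    (hw : ∀ t ∈ D, HasDerivWithinAt w (-β • w t - μ • z t) D t) :
    AntitoneOn (fun t => μ * ‖z t‖ ^ 2 + ‖w t‖ ^ 2) D := by
  have hE : ∀ t ∈ D, HasDerivWithinAt (fun t => μ * ‖z t‖ ^ 2 + ‖w t‖ ^ 2)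
      (-(2 * β * ‖w t‖ ^ 2)) D t := by
    intro t ht
    refine (((hz t ht).norm_sq.const_mul μ).add (hw t ht).norm_sq).congr_deriv ?_
    rw [inner_sub_right, real_inner_smul_right, real_inner_smul_right,
      real_inner_self_eq_norm_sq, real_inner_comm]
    ring
  refine antitoneOn_of_hasDerivWithinAt_nonpos (f' := fun t => -(2 * β * ‖w t‖ ^ 2)) hD
    (fun t ht => (hE t ht).continuousWithinAt) (fun t ht => ?_) (fun t _ => ?_)
  · exact (hE t (interior_subset ht)).mono interior_subset
  · have := mul_nonneg hβ (sq_nonneg ‖w t‖)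
    linarith

theorem HasDerivWithinAt.exp_mul_smul {y : ℝ → E} {v : E} {D : Set ℝ} {t : ℝ} (δ : ℝ)
    (hy : HasDerivWithinAt y v D t) :
    HasDerivWithinAt (fun u => Real.exp (δ * u) • y u) (Real.exp (δ * t) • (v + δ • y t)) D t := by
  have hexp : HasDerivAt (fun u => Real.exp (δ * u)) (Real.exp (δ * t) * δ) t := by
    simpa using ((hasDerivAt_id t).const_mul δ).exp
  refine (hexp.hasDerivWithinAt.smul hy).congr_deriv ?_
  module

/-- The substitution `z = e^{δt} y` turns `y'' + b y' + k y = 0` into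
`z'' + (b - 2δ) z' + (k - bδ + δ²) z = 0`. -/
theorem HasDerivWithinAt.exp_mul_smul_damped {y v : ℝ → E} {D : Set ℝ} {t b k : ℝ} (δ : ℝ)
    (hy : HasDerivWithinAt y (v t) D t) (hv : HasDerivWithinAt v (-b • v t - k • y t) D t) :
    HasDerivWithinAt (fun u => Real.exp (δ * u) • (v u + δ • y u))
      (-(b - 2 * δ) • (Real.exp (δ * t) • (v t + δ • y t))
        - (k - b * δ + δ ^ 2) • (Real.exp (δ * t) • y t)) D t := by
  refine ((hv.add (hy.const_smul δ)).exp_mul_smul δ).congr_deriv ?_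
  simp only [Pi.add_apply, Pi.smul_apply]
  module

theorem exp_mul_damped_energy_le {y v : ℝ → E} {b k δ : ℝ} (hδ : 2 * δ ≤ b)
    (hy : ∀ t ∈ Ici 0, HasDerivWithinAt y (v t) (Ici 0) t)
    (hv : ∀ t ∈ Ici 0, HasDerivWithinAt v (-b • v t - k • y t) (Ici 0) t) {t : ℝ} (ht : 0 ≤ t) :
    exp (2 * δ * t) * ((k - b * δ + δ ^ 2) * ‖y t‖ ^ 2 + ‖v t + δ • y t‖ ^ 2)
      ≤ (k - b * δ + δ ^ 2) * ‖y 0‖ ^ 2 + ‖v 0 + δ • y 0‖ ^ 2 := by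
  have key := antitoneOn_damped_energy (convex_Ici 0) (sub_nonneg.2 hδ)
    (fun t ht => (hy t ht).exp_mul_smul δ)
    (fun t ht => HasDerivWithinAt.exp_mul_smul_damped δ (hy t ht) (hv t ht))
    self_mem_Ici (mem_Ici.2 ht) ht
  have hnorm : ∀ x : E, ‖exp (δ * t) • x‖ ^ 2 = exp (2 * δ * t) * ‖x‖ ^ 2 := fun x => by
    rw [norm_smul, norm_of_nonneg (exp_pos _).le, mul_pow, ← exp_nat_mul]
    ring_nf
  simp only [hnorm, mul_zero, exp_zero, one_smul] at key
  linarith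

theorem damped_deriv_norm_sq_le {y v : ℝ → E} {b m k : ℝ} (hb : 0 ≤ b) (hm : 0 ≤ m)
    (hmb : m ≤ b ^ 2) (hmk : m ≤ k)
    (hy : ∀ t ∈ Ici 0, HasDerivWithinAt y (v t) (Ici 0) t)
    (hv : ∀ t ∈ Ici 0, HasDerivWithinAt v (-b • v t - k • y t) (Ici 0) t) {t : ℝ} (ht : 0 ≤ t) :
    ‖v t‖ ^ 2 ≤ 4 * exp ((-b + √(b ^ 2 - m)) * t) * (k * ‖y 0‖ ^ 2 + ‖v 0‖ ^ 2) := by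
  set s := √(b ^ 2 - m)
  set δ := (b - s) / 2 with hδs
  have hs : s ^ 2 = b ^ 2 - m := sq_sqrt (by linarith)
  have hs0 : 0 ≤ s := sqrt_nonneg _
  have hsb : s ≤ b := by nlinarith
  have hδ : 0 ≤ δ := by linarith
  have hδb : 0 ≤ b - 2 * δ := by linarith
  have hmδ : m = 4 * δ * (b - δ) := by rw [hδs]; linear_combination hs
  have hμ : δ ^ 2 ≤ k - b * δ + δ ^ 2 := by nlinarith [mul_nonneg hδ hδb]
  have hμk : k - b * δ + δ ^ 2 + 2 * δ ^ 2 ≤ 2 * k := by nlinarith [mul_nonneg hδ hδb]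
  have hexp : exp ((-b + s) * t) * exp (2 * δ * t) = 1 := by
    rw [← exp_add, ← exp_zero, hδs]
    ring_nf
  have hsmul : ∀ x : E, ‖δ • x‖ ^ 2 = δ ^ 2 * ‖x‖ ^ 2 := fun x => by
    rw [norm_smul, mul_pow, norm_eq_abs, sq_abs]
  have hvt : ‖v t‖ ^ 2 ≤ 2 * ((k - b * δ + δ ^ 2) * ‖y t‖ ^ 2 + ‖v t + δ • y t‖ ^ 2) := by
    have := norm_add_sq_le_two_mul (v t + δ • y t) (-(δ • y t))
    rw [add_neg_cancel_right, norm_neg, hsmul] at this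
    nlinarith [sq_nonneg ‖y t‖]
  have hE0 : (k - b * δ + δ ^ 2) * ‖y 0‖ ^ 2 + ‖v 0 + δ • y 0‖ ^ 2
      ≤ 2 * (k * ‖y 0‖ ^ 2 + ‖v 0‖ ^ 2) := by
    have := norm_add_sq_le_two_mul (v 0) (δ • y 0)
    rw [hsmul] at this
    nlinarith [sq_nonneg ‖y 0‖]
  calc ‖v t‖ ^ 2
      ≤ 2 * ((k - b * δ + δ ^ 2) * ‖y t‖ ^ 2 + ‖v t + δ • y t‖ ^ 2) := hvt
    _ = 2 * exp ((-b + s) * t)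
          * (exp (2 * δ * t) * ((k - b * δ + δ ^ 2) * ‖y t‖ ^ 2 + ‖v t + δ • y t‖ ^ 2)) := by
        linear_combination
          (-2 * ((k - b * δ + δ ^ 2) * ‖y t‖ ^ 2 + ‖v t + δ • y t‖ ^ 2)) * hexp
    _ ≤ 2 * exp ((-b + s) * t) * ((k - b * δ + δ ^ 2) * ‖y 0‖ ^ 2 + ‖v 0 + δ • y 0‖ ^ 2) := by
        gcongr
        exact exp_mul_damped_energy_le (by linarith) hy hv ht
    _ ≤ 2 * exp ((-b + s) * t) * (2 * (k * ‖y 0‖ ^ 2 + ‖v 0‖ ^ 2)) := by gcongr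
    _ = 4 * exp ((-b + s) * t) * (k * ‖y 0‖ ^ 2 + ‖v 0‖ ^ 2) := by ring

end DampedOscillator

/-- Uniform-in-frequency estimate for the time derivative: for any `Λ > 0` and any
C² solution `y` of `y'' + b y' + (Λ + m) y = 0` on `[0,∞)`, one has
`|y'(t)|² ≤ C e^{(-b+√(b²-m))t} ((Λ+m)|y(0)|² + |y'(0)|²)` with `C = C(b,m)`. -/
theorem stmt_8 (b m : ℝ) (hb : 0 < b) (hm : 0 ≤ m) (hbm : 4 * m < b ^ 2) :
    ∃ C : ℝ, 0 < C ∧ ∀ Λ : ℝ, 0 < Λ →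
      ∀ y : ℝ → ℂ, ContDiffOn ℝ 2 y (Set.Ici 0) →
      (∀ t ∈ Set.Ici (0 : ℝ),
        derivWithin (derivWithin y (Set.Ici 0)) (Set.Ici 0) t
          + (b : ℂ) * derivWithin y (Set.Ici 0) t
          + ((Λ : ℂ) + (m : ℂ)) * y t = 0) →
      ∀ t : ℝ, 0 < t →
        ‖derivWithin y (Set.Ici 0) t‖ ^ 2 ≤
          C * Real.exp ((-b + Real.sqrt (b ^ 2 - m)) * t) *
            ((Λ + m) * ‖y 0‖ ^ 2
              + ‖derivWithin y (Set.Ici 0) 0‖ ^ 2) := by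
  refine ⟨4, by norm_num, fun Λ hΛ y hy hode t ht => ?_⟩
  have hy' : ∀ t ∈ Ici 0, HasDerivWithinAt y (derivWithin y (Ici 0) t) (Ici 0) t :=
    fun t ht => (hy.differentiableOn two_ne_zero t ht).hasDerivWithinAt
  have hy'' : ∀ t ∈ Ici 0, HasDerivWithinAt (derivWithin y (Ici 0))
      (-b • derivWithin y (Ici 0) t - (Λ + m) • y t) (Ici 0) t := by
    intro t ht
    have hy1 := hy.derivWithin (m := 1) (uniqueDiffOn_Ici 0) (by norm_num)
    refine ((hy1.differentiableOn one_ne_zero) t ht).hasDerivWithinAt.congr_deriv ?_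
    simp only [Complex.real_smul]
    push_cast
    linear_combination hode t ht
  exact damped_deriv_norm_sq_le hb.le hm (by linarith) (by linarith) hy' hy'' ht.le
end
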